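/- arXiv:2107.09027 — 5 statements merged into one kernel-verified Lean document; each statement's English description precedes it below -/
import Mathlib

section
/- Let B(x) = b_0 + b_1 x + ... + b_n x^n ∈ ℂ[x] with n < d, and let ξ = (ξ_1, ..., ξ_d) ∈ ℂ^d. Then max_{1≤i≤d} |B(ξ_i)| ≥ (1 − d^{3/2} D(ξ) M^{d−2}) · sqrt(Σ_{0≤j≤n} |b_j|^2), where M = max_{1≤i≤d} max{1, |ξ_i|} and D(ξ) is the finite discrepancy of ξ. -/
/-!
For `|u| = 1` the points `w_j = u ζ_d^j` are `d` equally spaced points on the unit circle.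
Since `n < d`, the monomials `1, x, …, xⁿ` are orthogonal for the counting measure on them, so
`∑_j |B(w_j)|² = d ∑_k |b_k|²` and some `|B(w_j)|` is at least `‖b‖₂`. Some `ξ_i` lies within
`max_j min_i |ξ_i - w_j|` of that `w_j`, and on the disc of radius `M` the polynomial `B` is
Lipschitz with constant `∑_k k |b_k| M^(k-1) ≤ d^(3/2) M^(d-2) ‖b‖₂` (Cauchy–Schwarz).
Taking the infimum over `u` gives the bound.
-/

/-- `ζ_d = exp(2πi/d)`. -/
noncomputable def zetad (d : ℕ) : ℂ := Complex.exp (2 * Real.pi * Complex.I / d)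

/-- The finite discrepancy `D(ξ) = inf_{|u|=1} max_j min_i |ξ_i − u ζ_d^j|`. -/
noncomputable def Disc {d : ℕ} (ξ : Fin d → ℂ) : ℝ :=
  sInf {t : ℝ | ∃ u : ℂ, ‖u‖ = 1 ∧
    t = ⨆ j : Fin d, ⨅ i : Fin d, ‖ξ i - u * zetad d ^ ((j : ℕ) + 1)‖}

open Complex ComplexConjugate Finset

lemma isPrimitiveRoot_zetad {d : ℕ} (hd : 0 < d) : IsPrimitiveRoot (zetad d) d := by
  simpa [zetad] using isPrimitiveRoot_exp d hd.ne'

lemma sum_pow_succ_eq_ite {d : ℕ} {x : ℂ} (hx : x ^ d = 1) :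
    ∑ i : Fin d, x ^ ((i : ℕ) + 1) = if x = 1 then (d : ℂ) else 0 := by
  split_ifs with h1
  · simp [h1]
  · rw [Fin.sum_univ_eq_sum_range (fun i => x ^ (i + 1))]
    simp only [pow_succ', ← mul_sum, geom_sum_eq h1, hx, sub_self, zero_div, mul_zero]

lemma sum_rotated_roots_pow_mul_conj_pow {d : ℕ} {ζ u : ℂ} (hζ : IsPrimitiveRoot ζ d)
    (hu : ‖u‖ = 1) {j k : ℕ} (hj : j < d) (hk : k < d) :
    ∑ i : Fin d, (u * ζ ^ ((i : ℕ) + 1)) ^ j * conj (u * ζ ^ ((i : ℕ) + 1)) ^ k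
      = if j = k then (d : ℂ) else 0 := by
  have hd : d ≠ 0 := by omega
  have hζ1 : ‖ζ‖ = 1 := hζ.norm'_eq_one hd
  have hsummand : ∀ i : ℕ, (u * ζ ^ (i + 1)) ^ j * conj (u * ζ ^ (i + 1)) ^ k
      = u ^ j * conj u ^ k * (ζ ^ j * conj ζ ^ k) ^ (i + 1) := by
    intro i
    simp only [map_mul, map_pow, mul_pow, ← pow_mul]
    ring
  have hω : (ζ ^ j * conj ζ ^ k) ^ d = 1 := by
    rw [mul_pow, ← map_pow, ← map_pow, pow_right_comm, pow_right_comm ζ k, hζ.pow_eq_one]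
    simp
  have hω1 : ζ ^ j * conj ζ ^ k = 1 ↔ j = k := by
    rw [← inv_eq_conj hζ1, inv_pow, mul_inv_eq_one₀ (pow_ne_zero _ (hζ.ne_zero hd))]
    exact ⟨hζ.pow_inj hj hk, fun h => h ▸ rfl⟩
  simp only [hsummand, ← Finset.mul_sum, sum_pow_succ_eq_ite hω, hω1]
  split_ifs with hjk
  · subst hjk
    rw [← mul_pow, mul_conj', hu]
    simp
  · rw [mul_zero]

noncomputable def evalCoeffs {n : ℕ} (b : Fin (n + 1) → ℂ) (x : ℂ) : ℂ :=
  ∑ j : Fin (n + 1), b j * x ^ (j : ℕ)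

lemma sum_norm_sq_evalCoeffs_rotated_roots {d n : ℕ} {ζ u : ℂ} (hζ : IsPrimitiveRoot ζ d)
    (hu : ‖u‖ = 1) (hn : n < d) (b : Fin (n + 1) → ℂ) :
    ∑ i : Fin d, ‖evalCoeffs b (u * ζ ^ ((i : ℕ) + 1))‖ ^ 2 = d * ∑ j, ‖b j‖ ^ 2 := by
  set w : Fin d → ℂ := fun i => u * ζ ^ ((i : ℕ) + 1)
  have horth (j k : Fin (n + 1)) :
      ∑ i, w i ^ (j : ℕ) * conj (w i) ^ (k : ℕ) = if j = k then (d : ℂ) else 0 := by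
    simp only [w, sum_rotated_roots_pow_mul_conj_pow hζ hu (j.2.trans_le hn) (k.2.trans_le hn),
      Fin.val_inj]
  apply Complex.ofReal_injective
  push_cast
  simp only [← mul_conj']
  calc ∑ i, evalCoeffs b (w i) * conj (evalCoeffs b (w i))
      = ∑ j, ∑ k, b j * conj (b k) * ∑ i, w i ^ (j : ℕ) * conj (w i) ^ (k : ℕ) := by
        simp only [evalCoeffs, map_sum, map_mul, map_pow, sum_mul_sum]
        simp only [mul_sum]
        rw [sum_comm]
        refine sum_congr rfl fun j _ => ?_
        rw [sum_comm]
        refine sum_congr rfl fun k _ => sum_congr rfl fun i _ => ?_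
        ring
    _ = d * ∑ j, b j * conj (b j) := by
        simp only [horth, mul_ite, mul_zero, sum_ite_eq, mem_univ, if_true, mul_sum]
        exact sum_congr rfl fun j _ => mul_comm _ _

lemma exists_sqrt_sum_sq_le_norm_evalCoeffs {d n : ℕ} {ζ u : ℂ} (hζ : IsPrimitiveRoot ζ d)
    (hd : 0 < d) (hu : ‖u‖ = 1) (hn : n < d) (b : Fin (n + 1) → ℂ) :
    ∃ j : Fin d, √(∑ k, ‖b k‖ ^ 2) ≤ ‖evalCoeffs b (u * ζ ^ ((j : ℕ) + 1))‖ := by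
  have hsum : ∑ _j : Fin d, ∑ k, ‖b k‖ ^ 2
      ≤ ∑ j : Fin d, ‖evalCoeffs b (u * ζ ^ ((j : ℕ) + 1))‖ ^ 2 := by
    simp [sum_norm_sq_evalCoeffs_rotated_roots hζ hu hn]
  obtain ⟨j, -, hj⟩ := exists_le_of_sum_le (univ_nonempty_iff.2 ⟨⟨0, hd⟩⟩) hsum
  exact ⟨j, (Real.sqrt_le_left (norm_nonneg _)).2 hj⟩

lemma norm_pow_sub_pow_le {R : Type*} [NormedCommRing R] [NormOneClass R] {x y : R} {M : ℝ}
    (hx : ‖x‖ ≤ M) (hy : ‖y‖ ≤ M) (j : ℕ) :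
    ‖x ^ j - y ^ j‖ ≤ j * M ^ (j - 1) * ‖x - y‖ := by
  have hM : 0 ≤ M := (norm_nonneg x).trans hx
  rw [← geom_sum₂_mul]
  refine (norm_mul_le _ _).trans (mul_le_mul_of_nonneg_right ?_ (norm_nonneg _))
  calc ‖∑ i ∈ range j, x ^ i * y ^ (j - 1 - i)‖
      ≤ ∑ i ∈ range j, M ^ (j - 1) := by
        refine norm_sum_le_of_le _ fun i hi => ?_
        have hij : i + (j - 1 - i) = j - 1 := by have := mem_range.1 hi; omega
        calc ‖x ^ i * y ^ (j - 1 - i)‖ ≤ ‖x‖ ^ i * ‖y‖ ^ (j - 1 - i) :=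
              (norm_mul_le _ _).trans (mul_le_mul (norm_pow_le _ _) (norm_pow_le _ _)
                (norm_nonneg _) (pow_nonneg (norm_nonneg _) _))
          _ ≤ M ^ i * M ^ (j - 1 - i) := by gcongr
          _ = M ^ (j - 1) := by rw [← pow_add, hij]
    _ = j * M ^ (j - 1) := by simp

lemma sum_mul_le_rpow_mul_sqrt {d n : ℕ} (hn : n < d) (a : Fin (n + 1) → ℝ) :
    ∑ j : Fin (n + 1), (j : ℝ) * a j ≤ (d : ℝ) ^ ((3 : ℝ) / 2) * √(∑ j, a j ^ 2) := by
  have hsq : ∑ j : Fin (n + 1), (j : ℝ) ^ 2 ≤ (d : ℝ) ^ 3 :=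
    calc ∑ j : Fin (n + 1), (j : ℝ) ^ 2 ≤ ∑ _j : Fin (n + 1), (d : ℝ) ^ 2 := by
          gcongr with j
          exact_mod_cast (j.2.trans_le hn).le
      _ = (n + 1) * (d : ℝ) ^ 2 := by simp
      _ ≤ d * (d : ℝ) ^ 2 := by gcongr; exact_mod_cast hn
      _ = (d : ℝ) ^ 3 := by ring
  have hd32 : √((d : ℝ) ^ 3) = (d : ℝ) ^ ((3 : ℝ) / 2) := by
    rw [Real.sqrt_eq_rpow, ← Real.rpow_natCast, ← Real.rpow_mul (Nat.cast_nonneg d)]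
    norm_num
  calc ∑ j : Fin (n + 1), (j : ℝ) * a j ≤ √(∑ j : Fin (n + 1), (j : ℝ) ^ 2) * √(∑ j, a j ^ 2) :=
        Real.sum_mul_le_sqrt_mul_sqrt _ _ _
    _ ≤ (d : ℝ) ^ ((3 : ℝ) / 2) * √(∑ j, a j ^ 2) := by
        rw [← hd32]; gcongr

lemma norm_evalCoeffs_sub_le {d n : ℕ} (hn : n < d) (b : Fin (n + 1) → ℂ) {x y : ℂ} {M : ℝ}
    (hM : 1 ≤ M) (hx : ‖x‖ ≤ M) (hy : ‖y‖ ≤ M) :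
    ‖evalCoeffs b x - evalCoeffs b y‖
      ≤ (d : ℝ) ^ ((3 : ℝ) / 2) * M ^ (d - 2) * √(∑ j, ‖b j‖ ^ 2) * ‖x - y‖ := by
  calc ‖evalCoeffs b x - evalCoeffs b y‖
      = ‖∑ j : Fin (n + 1), b j * (x ^ (j : ℕ) - y ^ (j : ℕ))‖ := by
        simp only [evalCoeffs, ← sum_sub_distrib, mul_sub]
    _ ≤ ∑ j : Fin (n + 1), ‖b j‖ * ((j : ℝ) * M ^ (d - 2) * ‖x - y‖) := by
        refine norm_sum_le_of_le _ fun j _ => ?_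
        rw [norm_mul]
        gcongr
        refine (norm_pow_sub_pow_le hx hy j).trans ?_
        have := j.2
        gcongr ?_ * ?_ * _
        exact pow_le_pow_right₀ hM (by omega)
    _ = (∑ j : Fin (n + 1), (j : ℝ) * ‖b j‖) * M ^ (d - 2) * ‖x - y‖ := by
        rw [sum_mul, sum_mul]
        exact sum_congr rfl fun j _ => by ring
    _ ≤ (d : ℝ) ^ ((3 : ℝ) / 2) * √(∑ j, ‖b j‖ ^ 2) * M ^ (d - 2) * ‖x - y‖ := by
        gcongr
        exact sum_mul_le_rpow_mul_sqrt hn _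
    _ = _ := by ring

lemma sqrt_sum_sq_le_iSup_add_mul_iSup_iInf {d n : ℕ} (hd : 0 < d) (hn : n < d)
    (b : Fin (n + 1) → ℂ) (ξ : Fin d → ℂ) {M : ℝ} (hM : 1 ≤ M) (hξ : ∀ i, ‖ξ i‖ ≤ M) {u : ℂ}
    (hu : ‖u‖ = 1) :
    √(∑ j, ‖b j‖ ^ 2) ≤ (⨆ i, ‖evalCoeffs b (ξ i)‖) +
      (d : ℝ) ^ ((3 : ℝ) / 2) * M ^ (d - 2) * √(∑ j, ‖b j‖ ^ 2) *
        ⨆ j : Fin d, ⨅ i : Fin d, ‖ξ i - u * zetad d ^ ((j : ℕ) + 1)‖ := by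
  have : Nonempty (Fin d) := ⟨⟨0, hd⟩⟩
  have hζ := isPrimitiveRoot_zetad hd
  obtain ⟨j, hj⟩ := exists_sqrt_sum_sq_le_norm_evalCoeffs hζ hd hu hn b
  set w := u * zetad d ^ ((j : ℕ) + 1)
  obtain ⟨i, hi⟩ := exists_eq_ciInf_of_finite (f := fun i => ‖ξ i - w‖)
  have hw : ‖w‖ ≤ M := by simpa [w, hu, hζ.norm'_eq_one hd.ne'] using hM
  have hdist : ‖ξ i - w‖ ≤ ⨆ j : Fin d, ⨅ i : Fin d, ‖ξ i - u * zetad d ^ ((j : ℕ) + 1)‖ :=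
    hi.trans_le (le_ciSup (f := fun j : Fin d => ⨅ i, ‖ξ i - u * zetad d ^ ((j : ℕ) + 1)‖)
      (Finite.bddAbove_range _) j)
  calc √(∑ j, ‖b j‖ ^ 2) ≤ ‖evalCoeffs b w‖ := hj
    _ ≤ ‖evalCoeffs b (ξ i)‖ + ‖evalCoeffs b (ξ i) - evalCoeffs b w‖ := norm_le_insert _ _
    _ ≤ (⨆ i, ‖evalCoeffs b (ξ i)‖) +
          (d : ℝ) ^ ((3 : ℝ) / 2) * M ^ (d - 2) * √(∑ j, ‖b j‖ ^ 2) * ‖ξ i - w‖ :=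
        add_le_add (le_ciSup (f := fun i => ‖evalCoeffs b (ξ i)‖) (Finite.bddAbove_range _) i)
          (norm_evalCoeffs_sub_le hn b hM (hξ i) hw)
    _ ≤ _ := by gcongr

open Pointwise in
lemma le_add_mul_csInf {s : Set ℝ} (hs : s.Nonempty) {a c K : ℝ} (hK : 0 ≤ K)
    (h : ∀ t ∈ s, a ≤ c + K * t) : a ≤ c + K * sInf s := by
  have : a - c ≤ sInf (K • s) := le_csInf hs.smul_set <| by
    rintro _ ⟨t, ht, rfl⟩
    linarith [h t ht, smul_eq_mul K t]
  rw [Real.sInf_smul_of_nonneg hK, smul_eq_mul] at this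
  linarith

/-- `max_i |B(ξ_i)| ≥ (1 − d^{3/2} D(ξ) M^{d−2}) · sqrt(Σ_j |b_j|²)`
with `M = max_i max{1, |ξ_i|}`. -/
theorem stmt2 (d n : ℕ) (hd : 0 < d) (hn : n < d) (b : Fin (n + 1) → ℂ) (ξ : Fin d → ℂ) :
    (1 - (d : ℝ) ^ ((3 : ℝ) / 2) * Disc ξ *
        (⨆ i : Fin d, max 1 ‖ξ i‖) ^ (d - 2)) *
      Real.sqrt (∑ j : Fin (n + 1), ‖b j‖ ^ 2) ≤
    ⨆ i : Fin d, ‖∑ j : Fin (n + 1), b j * ξ i ^ (j : ℕ)‖ := by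
  set M := ⨆ i : Fin d, max 1 ‖ξ i‖
  have hbdd : BddAbove (Set.range fun i : Fin d => max 1 ‖ξ i‖) := (Set.finite_range _).bddAbove
  have hM : 1 ≤ M := (le_max_left _ _).trans (le_ciSup hbdd ⟨0, hd⟩)
  have hξ (i : Fin d) : ‖ξ i‖ ≤ M := (le_max_right _ _).trans (le_ciSup hbdd i)
  have key : √(∑ j, ‖b j‖ ^ 2) ≤ (⨆ i, ‖evalCoeffs b (ξ i)‖) +
      (d : ℝ) ^ ((3 : ℝ) / 2) * M ^ (d - 2) * √(∑ j, ‖b j‖ ^ 2) * Disc ξ := by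
    unfold Disc
    refine le_add_mul_csInf ?_ (by positivity) fun _ ⟨_, hu, ht⟩ => ?_
    · exact ⟨_, 1, norm_one, rfl⟩
    · exact ht ▸ sqrt_sum_sq_le_iSup_add_mul_iSup_iInf hd hn b ξ hM hξ hu
  change _ ≤ ⨆ i, ‖evalCoeffs b (ξ i)‖
  linarith
end

section
/- Let p and d be odd primes with p ≠ d, set θ = p^{1/d} (a real d-th root) and K = ℚ(θ). If d^2 does not divide p^d − p, then the ring of integers of K equals ℤ[θ]. -/
open Polynomial IntermediateField

/-- Let `p` and `d` be odd primes, `θ` with `θ^d = p` and `K = ℚ(θ)` a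
number field. If `d² ∤ p^d − p`, then the ring of integers of `K` is `ℤ[θ]`, i.e.
an element of `K` is integral over `ℤ` iff it lies in `ℤ[θ]`. -/
theorem stmt12 (p d : ℕ) (hp : p.Prime) (hd : d.Prime) (hop : Odd p) (hod : Odd d)
    (hndvd : ¬ d ^ 2 ∣ p ^ d - p)
    (K : Type) [Field K] [NumberField K] (θ : K) (hθ : θ ^ d = (p : K))
    (hgen : IntermediateField.adjoin ℚ {θ} = ⊤) :
    ∀ x : K, IsIntegral ℤ x ↔ x ∈ Algebra.adjoin ℤ {θ} := by
  haveI : Fact d.Prime := ⟨hd⟩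
  have hd0 : d ≠ 0 := hd.ne_zero
  have hpZ : Prime (p : ℤ) := Int.prime_iff_natAbs_prime.2 (by simpa using hp)
  have hdZ : Prime (d : ℤ) := Int.prime_iff_natAbs_prime.2 (by simpa using hd)
  set f : ℤ[X] := X ^ d - C (p : ℤ) with hfdef
  have hfmonic : f.Monic := monic_X_pow_sub_C _ hd0
  have hfdeg : f.natDegree = d := by rw [hfdef]; exact natDegree_X_pow_sub_C
  have haevalθ : (aeval θ) f = 0 := by
    simp only [hfdef, map_sub, map_pow, aeval_X, aeval_C]
    rw [hθ]; simp
  have hθint : IsIntegral ℤ θ := ⟨f, hfmonic, haevalθ⟩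
  -- f is Eisenstein at p
  have hfE : f.IsEisensteinAt (Ideal.span {(p : ℤ)}) := by
    refine ⟨?_, ?_, ?_⟩
    · rw [hfmonic.leadingCoeff]
      intro h
      rw [Ideal.mem_span_singleton] at h
      exact hpZ.not_unit (isUnit_of_dvd_one h)
    · intro n hn
      rw [hfdeg] at hn
      rw [hfdef, coeff_sub, coeff_X_pow, if_neg hn.ne, coeff_C]
      split_ifs <;> simp [Ideal.mem_span_singleton]
    · have h0 : f.coeff 0 = -(p : ℤ) := by
        simp [hfdef, coeff_X_pow, Ne.symm hd0]
      rw [h0, Ideal.span_singleton_pow, Ideal.mem_span_singleton, dvd_neg]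
      intro h
      rw [pow_two] at h
      have h1 : (p : ℤ) * (p : ℤ) ∣ (p : ℤ) * 1 := by rwa [mul_one]
      exact hpZ.not_unit (isUnit_of_dvd_one ((mul_dvd_mul_iff_left hpZ.ne_zero).1 h1))
  have hfirr : Irreducible f := by
    refine hfE.irreducible ((Ideal.span_singleton_prime hpZ.ne_zero).2 hpZ)
      hfmonic.isPrimitive ?_
    rw [hfdeg]; exact hd.pos
  -- minpoly ℤ θ = f
  have hminθZ : minpoly ℤ θ = f := by
    obtain ⟨c, hc⟩ := minpoly.isIntegrallyClosed_dvd hθint haevalθ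
    rcases hfirr.isUnit_or_isUnit hc with h | h
    · exact absurd (natDegree_eq_zero_of_isUnit h)
        (minpoly.natDegree_pos hθint).ne'
    · obtain ⟨u, rfl⟩ := h
      exact eq_of_monic_of_associated (minpoly.monic hθint) hfmonic ⟨u, hc.symm⟩
  have hmapinj : Function.Injective (Polynomial.map (algebraMap ℤ ℚ)) :=
    Polynomial.map_injective _ Int.cast_injective
  have hminθQ : minpoly ℚ θ = X ^ d - C (p : ℚ) := by
    rw [minpoly.isIntegrallyClosed_eq_field_fractions' ℚ hθint, hminθZ, hfdef]
    push_cast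
    simp [Polynomial.map_sub, Polynomial.map_pow]
  -- the shifted generator η = θ - p
  set η : K := θ - (p : K) with hηdef
  set g : ℤ[X] := (X + C (p : ℤ)) ^ d - C (p : ℤ) with hgdef
  have hgf : g = f.comp (X + C (p : ℤ)) := by
    rw [hgdef, hfdef]
    simp [sub_comp, pow_comp, X_comp, C_comp]
  have hgmonic : g.Monic := by
    rw [hgf]; exact hfmonic.comp_X_add_C _
  have haevalη : (aeval η) g = 0 := by
    simp only [hgdef, map_sub, map_pow, map_add, aeval_X, aeval_C, hηdef]
    have : θ - (p : K) + (algebraMap ℤ K) (p : ℤ) = θ := by push_cast; ring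
    rw [this, hθ]
    push_cast; ring
  have hηint : IsIntegral ℤ η := ⟨g, hgmonic, haevalη⟩
  have hminηQ : minpoly ℚ η = (minpoly ℚ θ).comp (X + C ((p : ℕ) : ℚ)) := by
    have h1 : η = θ - algebraMap ℚ K ((p : ℕ) : ℚ) := by
      rw [hηdef]; norm_num
    rw [h1, minpoly.sub_algebraMap]
  have hminηZ : minpoly ℤ η = g := by
    apply hmapinj
    rw [← minpoly.isIntegrallyClosed_eq_field_fractions' ℚ hηint, hminηQ, hminθQ, hgdef]
    push_cast
    simp [sub_comp, pow_comp, X_comp, C_comp, Polynomial.map_sub, Polynomial.map_pow,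
      Polynomial.map_add]
  have hgdeg : g.natDegree = d := by
    rw [hgf, natDegree_comp, hfdeg, natDegree_X_add_C, mul_one]
  -- Fermat's little theorem: d ∣ p^d - p (in ℤ)
  have hfermat : (d : ℤ) ∣ (p : ℤ) ^ d - (p : ℤ) := by
    have : (((p : ℤ) ^ d - (p : ℤ) : ℤ) : ZMod d) = 0 := by
      push_cast
      rw [ZMod.pow_card]
      ring
    exact (ZMod.intCast_zmod_eq_zero_iff_dvd _ d).1 this
  have hple : p ≤ p ^ d := Nat.le_self_pow hd0 p
  have hnd2 : ¬ ((d : ℤ) ^ 2 ∣ (p : ℤ) ^ d - (p : ℤ)) := by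
    intro h
    apply hndvd
    have : ((p : ℤ) ^ d - (p : ℤ)) = ((p ^ d - p : ℕ) : ℤ) := by
      push_cast [Nat.cast_sub hple]; ring
    rw [this] at h
    exact_mod_cast h
  -- g is Eisenstein at d
  have hgcoeff : ∀ n, n < d → g.coeff n =
      (p : ℤ) ^ (d - n) * (d.choose n : ℤ) - (if n = 0 then (p : ℤ) else 0) := by
    intro n hn
    rw [hgdef, coeff_sub, coeff_X_add_C_pow, coeff_C]
  have hgE : g.IsEisensteinAt (Ideal.span {(d : ℤ)}) := by
    refine ⟨?_, ?_, ?_⟩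
    · rw [hgmonic.leadingCoeff]
      intro h
      rw [Ideal.mem_span_singleton] at h
      exact hdZ.not_unit (isUnit_of_dvd_one h)
    · intro n hn
      rw [hgdeg] at hn
      rw [hgcoeff n hn, Ideal.mem_span_singleton]
      rcases eq_or_ne n 0 with rfl | hn0
      · simp only [if_pos rfl, Nat.sub_zero, Nat.choose_zero_right, Nat.cast_one, mul_one]
        exact hfermat
      · rw [if_neg hn0, sub_zero]
        exact Dvd.dvd.mul_left (Int.natCast_dvd_natCast.2 (hd.dvd_choose_self hn0 hn)) _
    · rw [hgcoeff 0 hd.pos, Ideal.span_singleton_pow, Ideal.mem_span_singleton]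
      simp only [if_pos rfl, Nat.sub_zero, Nat.choose_zero_right, Nat.cast_one, mul_one]
      exact hnd2
  -- power bases
  have hθQint : IsIntegral ℚ θ := hθint.tower_top
  let e : (IntermediateField.adjoin ℚ ({θ} : Set K)) ≃ₐ[ℚ] K :=
    (IntermediateField.equivOfEq hgen).trans IntermediateField.topEquiv
  have hegen : e (IntermediateField.AdjoinSimple.gen ℚ θ) = θ := rfl
  let pbθ : PowerBasis ℚ K := (IntermediateField.adjoin.powerBasis hθQint).map e
  have hpbθgen : pbθ.gen = θ := hegen
  have hfinrank : Module.finrank ℚ K = d := by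
    rw [← IntermediateField.finrank_top' (F := ℚ) (E := K), ← hgen,
      IntermediateField.adjoin.finrank hθQint, hminθQ, natDegree_X_pow_sub_C]
  -- η generates too
  have hgen' : IntermediateField.adjoin ℚ ({η} : Set K) = ⊤ := by
    rw [← top_le_iff, ← hgen, IntermediateField.adjoin_le_iff]
    rintro x hx
    rw [Set.mem_singleton_iff] at hx; subst hx
    have h1 : η ∈ IntermediateField.adjoin ℚ ({η} : Set K) :=
      IntermediateField.subset_adjoin _ _ rfl
    have h2 : ((p : ℕ) : K) ∈ IntermediateField.adjoin ℚ ({η} : Set K) := by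
      have := (IntermediateField.adjoin ℚ ({η} : Set K)).algebraMap_mem ((p : ℕ) : ℚ)
      simpa using this
    have := add_mem h1 h2
    rwa [hηdef, sub_add_cancel] at this
  have hηQint : IsIntegral ℚ η := hηint.tower_top
  let e' : (IntermediateField.adjoin ℚ ({η} : Set K)) ≃ₐ[ℚ] K :=
    (IntermediateField.equivOfEq hgen').trans IntermediateField.topEquiv
  let pbη : PowerBasis ℚ K := (IntermediateField.adjoin.powerBasis hηQint).map e'
  have hpbηgen : pbη.gen = η := rfl
  -- adjoin ℤ {η} = adjoin ℤ {θ}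
  have hadj : Algebra.adjoin ℤ ({η} : Set K) = Algebra.adjoin ℤ ({θ} : Set K) := by
    apply le_antisymm
    · rw [Algebra.adjoin_le_iff]
      rintro x hx
      rw [Set.mem_singleton_iff] at hx; subst hx
      have h1 : θ ∈ Algebra.adjoin ℤ ({θ} : Set K) := Algebra.subset_adjoin rfl
      have h2 : ((p : ℕ) : K) ∈ Algebra.adjoin ℤ ({θ} : Set K) := by
        have := (Algebra.adjoin ℤ ({θ} : Set K)).algebraMap_mem ((p : ℕ) : ℤ)
        simpa using this
      rw [hηdef]
      exact sub_mem h1 h2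
    · rw [Algebra.adjoin_le_iff]
      rintro x hx
      rw [Set.mem_singleton_iff] at hx; subst hx
      have h1 : η ∈ Algebra.adjoin ℤ ({η} : Set K) := Algebra.subset_adjoin rfl
      have h2 : ((p : ℕ) : K) ∈ Algebra.adjoin ℤ ({η} : Set K) := by
        have := (Algebra.adjoin ℤ ({η} : Set K)).algebraMap_mem ((p : ℕ) : ℤ)
        simpa using this
      have := add_mem h1 h2
      rwa [hηdef, sub_add_cancel] at this
  -- norm of θ
  have hnormθ : Algebra.norm ℚ θ = (p : ℚ) := by
    have h1 := Algebra.PowerBasis.norm_gen_eq_coeff_zero_minpoly pbθ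
    have hdim : pbθ.dim = d := by rw [← pbθ.finrank, hfinrank]
    rw [hpbθgen, hminθQ, hdim] at h1
    rw [h1, Odd.neg_one_pow hod]
    simp [coeff_X_pow, coeff_C, Ne.symm hd0]
  -- discriminant value
  have hdisc : Algebra.discr ℚ pbθ.basis =
      (-1 : ℚ) ^ (d * (d - 1) / 2) * ((d : ℚ) ^ d * (p : ℚ) ^ (d - 1)) := by
    rw [Algebra.discr_powerBasis_eq_norm, hfinrank, hpbθgen, hminθQ]
    have hder : derivative (X ^ d - C (p : ℚ)) = C (d : ℚ) * X ^ (d - 1) := by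
      rw [derivative_sub, derivative_C, derivative_X_pow, sub_zero, C_eq_natCast]
    rw [hder]
    have haev : (aeval θ) (C (d : ℚ) * X ^ (d - 1)) =
        algebraMap ℚ K (d : ℚ) * θ ^ (d - 1) := by
      simp [Algebra.smul_def]
    rw [haev, map_mul, Algebra.norm_algebraMap, hfinrank, map_pow, hnormθ]
  -- the main direction
  intro x
  constructor
  · intro hx
    have key := Algebra.discr_mul_isIntegral_mem_adjoin (R := ℤ) (K := ℚ)
      (B := pbθ) (hpbθgen ▸ hθint) hx
    rw [hpbθgen, hdisc] at key
    -- strip the sign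
    have key2 : ((d : ℚ) ^ d * (p : ℚ) ^ (d - 1)) • x ∈ Algebra.adjoin ℤ ({θ} : Set K) := by
      rcases neg_one_pow_eq_or ℚ (d * (d - 1) / 2) with h | h <;> rw [h] at key
      · rwa [one_mul] at key
      · rw [neg_one_mul, neg_smul] at key
        have := neg_mem key
        rwa [neg_neg] at this
    have key3 : ((d : ℤ) ^ d) • (((p : ℤ) ^ (d - 1)) • x) ∈ Algebra.adjoin ℤ ({θ} : Set K) := by
      rw [← mul_smul]
      have hcast : (((d : ℤ) ^ d * (p : ℤ) ^ (d - 1) : ℤ) : ℚ) • x =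
          ((d : ℤ) ^ d * (p : ℤ) ^ (d - 1)) • x := Int.cast_smul_eq_zsmul ..
      rw [← hcast]
      convert key2 using 2
      push_cast; ring
    have hsmulint : IsIntegral ℤ (((p : ℤ) ^ (d - 1)) • x) := by
      rw [zsmul_eq_mul]
      exact (isIntegral_algebraMap (x := (p : ℤ) ^ (d - 1))).mul hx
    rw [← hadj] at key3
    have step1 := mem_adjoin_of_smul_prime_pow_smul_of_minpoly_isEisensteinAt (K := ℚ)
      hdZ (B := pbη) (hpbηgen ▸ hηint) hsmulint
      (by rw [hpbηgen]; exact key3) (by rw [hpbηgen, hminηZ]; exact hgE)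
    rw [hpbηgen, hadj] at step1
    have step2 := mem_adjoin_of_smul_prime_pow_smul_of_minpoly_isEisensteinAt (K := ℚ)
      hpZ (B := pbθ) (hpbθgen ▸ hθint) hx
      (by rw [hpbθgen]; exact step1) (by rw [hpbθgen, hminθZ]; exact hfE)
    rwa [hpbθgen] at step2
  · intro hx
    have hle : Algebra.adjoin ℤ ({θ} : Set K) ≤ integralClosure ℤ K := by
      rw [Algebra.adjoin_le_iff]
      rintro y hy
      rw [Set.mem_singleton_iff] at hy; subst hy
      exact hθint
    exact hle hx
end

section
/- Let f : ℚ̄ → [0,∞) and let A_0 ⊆ A_1 ⊆ A_2 ⊆ ... be a nested sequence of subsets of the algebraic numbers with union A. If each A_i has the Northcott property with respect to f (i.e., for every X, only finitely many α ∈ A_i have f(α) < X), then the Northcott number N_f(A) equals liminf_{i→∞} δ_f(A_i \ A_{i−1}), where δ_f(S) = inf{f(α) : α ∈ S}. -/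
/-- The Northcott number of `S` with respect to `f`:
`N_f(S) = inf{t ≥ 0 : #{α ∈ S : f(α) < t} = ∞}`, with `inf ∅ = ∞` in `EReal`. -/
noncomputable def NorthcottNumber (f : AlgebraicClosure ℚ → ℝ)
    (S : Set (AlgebraicClosure ℚ)) : EReal :=
  sInf {t : EReal | 0 ≤ t ∧ {α ∈ S | (f α : EReal) < t}.Infinite}

/-- `δ_f(S) = inf{f(α) : α ∈ S}`, with `δ_f(∅) = ∞` in `EReal`. -/
noncomputable def deltaf (f : AlgebraicClosure ℚ → ℝ)
    (S : Set (AlgebraicClosure ℚ)) : EReal :=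
  sInf ((fun α => (f α : EReal)) '' S)

/-- If each member of a nested sequence `A_0 ⊆ A_1 ⊆ ⋯` of subsets of `ℚ̄`
has the Northcott property with respect to `f`, then the Northcott number of the union
equals `liminf_{i→∞} δ_f(A_i \ A_{i−1})`. -/
theorem stmt13 (f : AlgebraicClosure ℚ → ℝ) (hf : ∀ α, 0 ≤ f α)
    (A : ℕ → Set (AlgebraicClosure ℚ)) (hmono : Monotone A)
    (hN : ∀ i, ∀ X : ℝ, {α ∈ A i | f α < X}.Finite) :
    NorthcottNumber f (⋃ i, A i) =
      Filter.liminf (fun i => deltaf f (A (i + 1) \ A i)) Filter.atTop := by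
  classical
  set D : ℕ → Set (AlgebraicClosure ℚ) := fun i => A (i + 1) \ A i with hDdef
  -- disjointness of the D i
  have hdisj : ∀ i j α, α ∈ D i → α ∈ D j → i = j := by
    intro i j α hi hj
    by_contra hne
    rcases Nat.lt_or_ge i j with h | h
    · exact hj.2 (hmono (Nat.succ_le_of_lt h) hi.1)
    · have h' : j < i := lt_of_le_of_ne h (fun h'' => hne h''.symm)
      exact hi.2 (hmono (Nat.succ_le_of_lt h') hj.1)
  -- key infiniteness lemma
  have key : ∀ t : EReal, (∀ n : ℕ, ∃ i, n ≤ i ∧ ∃ α ∈ D i, (f α : EReal) < t) →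
      {α ∈ ⋃ i, A i | (f α : EReal) < t}.Infinite := by
    intro t ht
    set T := {α ∈ ⋃ i, A i | (f α : EReal) < t} with hT
    set I := {i : ℕ | ∃ α, α ∈ D i ∧ α ∈ T} with hI
    have hImem : ∀ n : ℕ, ∃ i, n ≤ i ∧ i ∈ I := by
      intro n
      obtain ⟨i, hni, α, hαD, hαt⟩ := ht n
      exact ⟨i, hni, α, hαD, ⟨Set.mem_iUnion.2 ⟨i + 1, hαD.1⟩, hαt⟩⟩
    have hIinf : I.Infinite := by
      intro hfin
      obtain ⟨n, hn⟩ := hfin.bddAbove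
      obtain ⟨i, hni, hiI⟩ := hImem (n + 1)
      have := hn hiI
      omega
    set g : ℕ → AlgebraicClosure ℚ := fun i =>
      if h : ∃ α, α ∈ D i ∧ α ∈ T then h.choose else 0 with hg
    have hgspec : ∀ i ∈ I, g i ∈ D i ∧ g i ∈ T := by
      intro i hi
      have h' : ∃ α, α ∈ D i ∧ α ∈ T := hi
      simp only [hg, dif_pos h']
      exact h'.choose_spec
    have hinj : Set.InjOn g I := by
      intro i hi j hj hij
      exact hdisj i j (g i) (hgspec i hi).1 (hij ▸ (hgspec j hj).1)
    have hmaps : Set.MapsTo g I T := fun i hi => (hgspec i hi).2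
    exact Set.infinite_of_injOn_mapsTo hinj hmaps hIinf
  -- each δ is nonnegative
  have hδ0 : ∀ i, (0 : EReal) ≤ deltaf f (D i) := by
    intro i
    refine le_sInf ?_
    rintro y ⟨α, hα, rfl⟩
    show (0 : EReal) ≤ (f α : EReal)
    exact_mod_cast hf α
  have h0L : (0 : EReal) ≤ Filter.liminf (fun i => deltaf f (D i)) Filter.atTop :=
    Filter.le_liminf_of_le (by isBoundedDefault)
      (Filter.Eventually.of_forall fun i => hδ0 i)
  refine le_antisymm ?_ ?_
  · -- N ≤ liminf
    refine le_of_forall_gt_imp_ge_of_dense fun t ht => ?_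
    refine sInf_le ⟨le_trans h0L ht.le, ?_⟩
    apply key
    intro n
    have hfreq : ∃ᶠ i in Filter.atTop, deltaf f (D i) < t :=
      Filter.frequently_lt_of_liminf_lt (by isBoundedDefault) ht
    obtain ⟨i, hni, hlt⟩ := (Filter.frequently_atTop.1 hfreq) n
    obtain ⟨y, hy, hyt⟩ := sInf_lt_iff.1 hlt
    obtain ⟨α, hα, rfl⟩ := hy
    exact ⟨i, hni, α, hα, hyt⟩
  · -- liminf ≤ N
    refine le_sInf ?_
    rintro t ⟨ht0, htinf⟩
    by_contra hlt
    push_neg at hlt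
    have hev : ∀ᶠ i in Filter.atTop, t < deltaf f (D i) :=
      Filter.eventually_lt_of_lt_liminf hlt
    obtain ⟨n, hn⟩ := Filter.eventually_atTop.1 hev
    have htop : t ≠ ⊤ := (lt_of_lt_of_le (hn n le_rfl) le_top).ne
    have hbot : t ≠ ⊥ := by
      intro h; rw [h] at ht0; exact absurd ht0 (by simp)
    lift t to ℝ using ⟨htop, hbot⟩ with x
    have hsub : {α ∈ ⋃ i, A i | (f α : EReal) < (x : EReal)} ⊆ {α ∈ A n | f α < x} := by
      rintro α ⟨hαU, hαx⟩
      have hfx : f α < x := by exact_mod_cast hαx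
      refine ⟨?_, hfx⟩
      by_contra hαn
      obtain ⟨j, hj⟩ := Set.mem_iUnion.1 hαU
      have hex : ∀ j, α ∈ A j → ∃ i, n ≤ i ∧ α ∈ D i := by
        intro j
        induction j with
        | zero => intro h0; exact absurd (hmono (Nat.zero_le n) h0) hαn
        | succ k ih =>
          intro hk1
          by_cases hk : α ∈ A k
          · exact ih hk
          · refine ⟨k, ?_, hk1, hk⟩
            by_contra hkn
            exact hαn (hmono (by omega) hk1)
      obtain ⟨i, hni, hDi⟩ := hex j hj
      have h1 : deltaf f (D i) ≤ (f α : EReal) := sInf_le ⟨α, hDi, rfl⟩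
      have h2 : (x : EReal) < deltaf f (D i) := hn i hni
      have h3 : (x : EReal) < (f α : EReal) := lt_of_lt_of_le h2 h1
      have : x < f α := by exact_mod_cast h3
      linarith
    exact htinf (Set.Finite.subset (hN n x) hsub)
end

section
/- Let f : ℚ̄ → [0,∞) satisfy: (f1) f(σ(α)) = f(α) for every field embedding σ of ℚ̄; and suppose there is a continuous F : ℝ² → [0,∞) with f(α+β) ≤ F(f(α), f(β)) and f(αβ) ≤ F(f(α), f(β)). Let K ⊆ ℚ̄ be a subfield, U ⊆ K, and let S ⊆ ℚ̄ be a set of roots of monic irreducible polynomials in K[x] whose coefficients lie in U and whose degrees are bounded by E. If U has the Northcott property with respect to f, then S has the Northcott property with respect to f. -/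
/-!
Let `α ∈ S` with `f α < X`, and let `P` be its monic irreducible polynomial over `K`. The roots
of `P` are the conjugates of `α`, so `f` takes the value `f α` on all of them. Each coefficient
of `P` is obtained from these at most `E` roots by boundedly many additions and multiplications,
and `F` is bounded on compact squares, so `f` is bounded on the coefficients of `P` by a constant
depending only on `X` and `E`. The Northcott property of `U` leaves finitely many candidates
for `P`, each with finitely many roots.
-/

open Polynomial Set

/-- If `f (a + b)` and `f (a * b)` are at most `F (f a, f b)`, then `f ≤ boundSeq F X₀ n` on
everything built by `n` nested additions and multiplications from elements where `f ≤ X₀`. -/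
noncomputable def boundSeq (F : ℝ × ℝ → ℝ) (X₀ : ℝ) : ℕ → ℝ
  | 0 => X₀
  | n + 1 => max (boundSeq F X₀ n)
      (sSup (F '' (Icc 0 (boundSeq F X₀ n) ×ˢ Icc 0 (boundSeq F X₀ n))))

lemma boundSeq_mono (F : ℝ × ℝ → ℝ) (X₀ : ℝ) : Monotone (boundSeq F X₀) :=
  monotone_nat_of_le_succ fun _ => le_max_left _ _

lemma apply_le_boundSeq_succ {F : ℝ × ℝ → ℝ} (hF : Continuous F) {X₀ a b : ℝ} {n : ℕ}
    (ha₀ : 0 ≤ a) (ha : a ≤ boundSeq F X₀ n) (hb₀ : 0 ≤ b) (hb : b ≤ boundSeq F X₀ n) :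
    F (a, b) ≤ boundSeq F X₀ (n + 1) :=
  (le_csSup ((isCompact_Icc.prod isCompact_Icc).image hF).bddAbove
    ⟨(a, b), ⟨⟨ha₀, ha⟩, ⟨hb₀, hb⟩⟩, rfl⟩).trans (le_max_right _ _)

section CoeffBound

variable {R : Type*} [CommRing R] {f : R → ℝ} {F : ℝ × ℝ → ℝ} {X₀ : ℝ}

lemma coeff_prod_X_sub_C_le_boundSeq (hf₀ : ∀ x, 0 ≤ f x) (hF : Continuous F)
    (hadd : ∀ x y, f (x + y) ≤ F (f x, f y)) (hmul : ∀ x y, f (x * y) ≤ F (f x, f y))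
    (h₀ : f 0 ≤ X₀) (h₁ : f 1 ≤ X₀) (hneg₁ : f (-1) ≤ X₀)
    (s : Multiset R) (hs : ∀ r ∈ s, f r ≤ X₀) (k : ℕ) :
    f ((s.map fun r => X - C r).prod.coeff k) ≤ boundSeq F X₀ (3 * Multiset.card s) := by
  induction s using Multiset.induction_on generalizing k with
  | empty =>
    rcases k with _ | k
    · simpa [coeff_one, boundSeq] using h₁
    · simpa [coeff_one, boundSeq] using h₀
  | cons r s ih =>
    set Q := (s.map fun r => X - C r).prod
    set n := Multiset.card s
    have hB : ∀ {x m}, f x ≤ X₀ → f x ≤ boundSeq F X₀ m :=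
      fun hx => hx.trans (boundSeq_mono F X₀ (Nat.zero_le _))
    have ih' : ∀ k m, 3 * n ≤ m → f (Q.coeff k) ≤ boundSeq F X₀ m :=
      fun k _ hm => (ih (fun x hx => hs x (Multiset.mem_cons_of_mem hx)) k).trans
        (boundSeq_mono F X₀ hm)
    have hr : f (-r) ≤ boundSeq F X₀ (3 * n + 1) := by
      rw [← neg_one_mul]
      exact (hmul _ _).trans <| apply_le_boundSeq_succ hF (hf₀ _) (hB hneg₁) (hf₀ _)
        (hB (hs r (Multiset.mem_cons_self r s)))
    have hXQ : f ((X * Q).coeff k) ≤ boundSeq F X₀ (3 * n + 2) := by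
      rcases k with _ | k
      · simpa [mul_coeff_zero] using hB h₀
      · rw [coeff_X_mul]
        exact ih' k _ (by omega)
    have hrQ : f (-r * Q.coeff k) ≤ boundSeq F X₀ (3 * n + 2) :=
      (hmul _ _).trans (apply_le_boundSeq_succ hF (hf₀ _) hr (hf₀ _) (ih' k _ (by omega)))
    have hcoeff : ((X - C r) * Q).coeff k = (X * Q).coeff k + -r * Q.coeff k := by
      rw [sub_mul, coeff_sub, coeff_C_mul, neg_mul, sub_eq_add_neg]
    rw [Multiset.map_cons, Multiset.prod_cons, Multiset.card_cons, hcoeff]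
    exact (hadd _ _).trans (apply_le_boundSeq_succ hF (hf₀ _) hXQ (hf₀ _) hrQ)

end CoeffBound

lemma apply_eq_of_aeval_minpoly_eq_zero {K L β : Type*} [Field K] [Field L] [Algebra K L]
    [Normal K L] {f : L → β} (hf : ∀ (σ : L ≃ₐ[K] L) x, f (σ x) = f x) {α r : L}
    (hr : aeval r (minpoly K α) = 0) : f r = f α := by
  obtain ⟨σ, rfl⟩ := minpoly.exists_algEquiv_of_root (Algebra.IsAlgebraic.isAlgebraic α) hr
  exact (hf σ r).symm

lemma coeff_map_le_boundSeq_of_aeval_eq_zero {K L : Type*} [Field K] [Field L] [Algebra K L]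
    [IsAlgClosed L] [Normal K L] {f : L → ℝ} (hf₀ : ∀ x, 0 ≤ f x)
    (hf : ∀ (σ : L ≃ₐ[K] L) x, f (σ x) = f x) {F : ℝ × ℝ → ℝ} (hF : Continuous F)
    (hadd : ∀ x y, f (x + y) ≤ F (f x, f y)) (hmul : ∀ x y, f (x * y) ≤ F (f x, f y))
    {X₀ : ℝ} (h₀ : f 0 ≤ X₀) (h₁ : f 1 ≤ X₀) (hneg₁ : f (-1) ≤ X₀)
    {P : K[X]} (hP : P.Monic) (hirr : Irreducible P) {α : L} (hα : aeval α P = 0)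
    (hαX₀ : f α ≤ X₀) (k : ℕ) :
    f ((P.map (algebraMap K L)).coeff k) ≤ boundSeq F X₀ (3 * P.natDegree) := by
  set Q := P.map (algebraMap K L)
  have hmin : minpoly K α = P := (minpoly.eq_of_irreducible_of_monic hirr hα hP).symm
  have hroots : ∀ r ∈ Q.roots, f r ≤ X₀ := fun r hr => by
    have hr' : aeval r (minpoly K α) = 0 := by
      rw [hmin, aeval_def, ← eval_map]
      exact isRoot_of_mem_roots hr
    rw [apply_eq_of_aeval_minpoly_eq_zero hf hr']
    exact hαX₀
  have hbound := coeff_prod_X_sub_C_le_boundSeq hf₀ hF hadd hmul h₀ h₁ hneg₁ Q.roots hroots k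
  rwa [← (IsAlgClosed.splits Q).eq_prod_roots_of_monic (hP.map _),
    IsAlgClosed.card_roots_eq_natDegree, natDegree_map] at hbound

lemma Polynomial.finite_setOf_natDegree_le_coeff_mem {R : Type*} [Semiring R] {T : Set R}
    (hT : T.Finite) (n : ℕ) : {p : R[X] | p.natDegree ≤ n ∧ ∀ k, p.coeff k ∈ T}.Finite := by
  refine Finite.of_finite_image (f := fun p (i : Fin (n + 1)) => p.coeff i)
    ((Finite.pi fun _ => hT).subset ?_) ?_
  · rintro _ ⟨p, hp, rfl⟩ i -
    exact hp.2 i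
  · rintro p ⟨hp, -⟩ q ⟨hq, -⟩ hpq
    ext k
    by_cases hk : k ≤ n
    · exact congrFun hpq ⟨k, by omega⟩
    · rw [coeff_eq_zero_of_natDegree_lt (by omega), coeff_eq_zero_of_natDegree_lt (by omega)]

lemma Polynomial.finite_setOf_isRoot_of_coeff_mem {R : Type*} [CommRing R] [IsDomain R]
    {T : Set R} (hT : T.Finite) (n : ℕ) :
    {x : R | ∃ p : R[X], p ≠ 0 ∧ p.natDegree ≤ n ∧ (∀ k, p.coeff k ∈ T) ∧ p.IsRoot x}.Finite := by
  refine (((finite_setOf_natDegree_le_coeff_mem hT n).sdiff (t := {0})).biUnion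
    fun p hp => p.finite_setOfPred_isRoot hp.2).subset ?_
  rintro x ⟨p, hp₀, hpn, hpT, hpx⟩
  exact mem_biUnion ⟨⟨hpn, hpT⟩, hp₀⟩ hpx

instance Subfield.isAlgClosure_algebraicClosure_rat (K : Subfield (AlgebraicClosure ℚ)) :
    IsAlgClosure K (AlgebraicClosure ℚ) :=
  -- the `ℚ`-algebra structure from `CharZero` and the one of `AlgebraicClosure ℚ` are not
  -- syntactically equal
  have : Algebra.IsAlgebraic ℚ (AlgebraicClosure ℚ) := by
    rw [Subsingleton.elim DivisionRing.toRatAlgebra (AlgebraicClosure.instAlgebra ℚ)]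
    exact AlgebraicClosure.isAlgebraic ℚ
  ⟨inferInstance, Algebra.IsAlgebraic.tower_top (K := ℚ) K⟩

theorem stmt14_general (f : AlgebraicClosure ℚ → ℝ) (hf0 : ∀ α, 0 ≤ f α)
    (hconj : ∀ (σ : AlgebraicClosure ℚ →+* AlgebraicClosure ℚ) (α), f (σ α) = f α)
    (F : ℝ × ℝ → ℝ) (hFcont : Continuous F)
    (hadd : ∀ α β, f (α + β) ≤ F (f α, f β))
    (hmul : ∀ α β, f (α * β) ≤ F (f α, f β))
    (K : Subfield (AlgebraicClosure ℚ)) (U : Set (AlgebraicClosure ℚ))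
    (E : ℕ) (S : Set (AlgebraicClosure ℚ))
    (hS : ∀ α ∈ S, ∃ P : Polynomial K, P.Monic ∧ Irreducible P ∧
      P.natDegree ≤ E ∧ (∀ k < P.natDegree, ((P.coeff k : AlgebraicClosure ℚ)) ∈ U) ∧
      Polynomial.eval₂ K.subtype α P = 0)
    (hU : ∀ X : ℝ, {u ∈ U | f u < X}.Finite) :
    ∀ X : ℝ, {α ∈ S | f α < X}.Finite := by
  intro X
  set X₀ := max X (max (f 0) (max (f 1) (f (-1))))
  set B := boundSeq F X₀ (3 * E) + 1
  refine (finite_setOf_isRoot_of_coeff_mem ((hU B).union (toFinite {0, 1})) E).subset ?_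
  rintro α ⟨hαS, hαX⟩
  obtain ⟨P, hP, hirr, hPE, hPU, hPα⟩ := hS α hαS
  have hQ : (P.map K.subtype).Monic := hP.map _
  have hbound := coeff_map_le_boundSeq_of_aeval_eq_zero (X₀ := X₀) hf0 (fun σ => hconj σ) hFcont
    hadd hmul (by simp [X₀]) (by simp [X₀]) (by simp [X₀]) hP hirr hPα
    (hαX.le.trans (le_max_left _ _))
  refine ⟨_, hQ.ne_zero, (natDegree_map _).trans_le hPE, fun k => ?_, by rwa [IsRoot, eval_map]⟩
  rcases lt_trichotomy k P.natDegree with hk | rfl | hk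
  · refine .inl ⟨by simpa using hPU k hk, (hbound k).trans_lt ?_⟩
    linarith [boundSeq_mono F X₀ (show 3 * P.natDegree ≤ 3 * E by omega)]
  · exact .inr (.inr (by simpa using hP.coeff_natDegree))
  · exact .inr (.inl (by simp [coeff_eq_zero_of_natDegree_lt hk]))

/-- (Dvornicich–Zannier.) Suppose `f : ℚ̄ → [0,∞)` is invariant under all
field embeddings of `ℚ̄`, and there is a continuous `F : ℝ² → ℝ` bounding `f` on sums and
products. Let `K ⊆ ℚ̄` be a subfield, `U ⊆ K`, and `S` a set of roots of monic irreducible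
polynomials in `K[x]` with coefficients in `U` and degree at most `E`. If `U` has the
Northcott property w.r.t. `f`, then so does `S`. -/
theorem stmt14 (f : AlgebraicClosure ℚ → ℝ) (hf0 : ∀ α, 0 ≤ f α)
    (hconj : ∀ (σ : AlgebraicClosure ℚ →+* AlgebraicClosure ℚ) (α), f (σ α) = f α)
    (F : ℝ × ℝ → ℝ) (hFcont : Continuous F) (hFnonneg : ∀ x, 0 ≤ F x)
    (hadd : ∀ α β, f (α + β) ≤ F (f α, f β))
    (hmul : ∀ α β, f (α * β) ≤ F (f α, f β))
    (K : Subfield (AlgebraicClosure ℚ)) (U : Set (AlgebraicClosure ℚ)) (hUK : U ⊆ K)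
    (E : ℕ) (S : Set (AlgebraicClosure ℚ))
    (hS : ∀ α ∈ S, ∃ P : Polynomial K, P.Monic ∧ Irreducible P ∧
      P.natDegree ≤ E ∧ (∀ k < P.natDegree, ((P.coeff k : AlgebraicClosure ℚ)) ∈ U) ∧
      Polynomial.eval₂ K.subtype α P = 0)
    (hU : ∀ X : ℝ, {u ∈ U | f u < X}.Finite) :
    ∀ X : ℝ, {α ∈ S | f α < X}.Finite :=
  stmt14_general f hf0 hconj F hFcont hadd hmul K U E S hS hU
end

section
/- Let K = ℚ(p_i^{1/d_i} : i ∈ ℕ), where (p_i) and (d_i) are sequences of primes with min{p_{i+1}, d_{i+1}} > max{p_i, d_i} for all i, and such that the ring of integers of ℚ(p_i^{1/d_i}) is ℤ[p_i^{1/d_i}] for each i. Then the ring of integers of K is the union over i of ℤ[p_1^{1/d_1}, ..., p_i^{1/d_i}]. -/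
/-!
Write `K_S = ℚ(ξ_i : i ∈ S)` and `A_S = ℤ[ξ_i : i ∈ S]` for finite `S ⊆ ℕ`. If `c • 𝓞_F ⊆ A` and
`d ∤ [F : ℚ]`, then `X ^ d - p` stays the minimal polynomial of `ξ = p^{1/d}` over `F`, the
discriminant of the power basis of `F(ξ)/F` is `± d^d p^{d-1}`, and the classical discriminant
argument gives `d^d p^{d-1} c • 𝓞_{F(ξ)} ⊆ A[ξ]`. Since the `d_i` are distinct primes, the
`ξ_i` with `i ∈ S` can be adjoined one at a time to `ℚ(ξ_j)`, whose ring of integers is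
`ℤ[ξ_j]`, for any `j ∈ S`; so `∏_{i ∈ S, i ≠ j} d_i^{d_i} p_i^{d_i-1}` multiplies `𝓞_{K_S}`
into `A_S`. A prime `q` lies in `{p_j, d_j}` for at most one `j`, so for each `q` one of these
multipliers is prime to `q`, and the ideal `{c ∈ ℤ | c • x ∈ A_S}` is all of `ℤ` for every
integral `x ∈ K_S`.
-/

open Polynomial IntermediateField Module

namespace RadicalTower

theorem irreducible_X_pow_sub_C_natPrime {p d : ℕ} (hp : p.Prime) (hd : d.Prime) :
    Irreducible (X ^ d - C (p : ℚ)) := by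
  refine X_pow_sub_C_irreducible_of_prime hd fun q hq => ?_
  have hint : IsIntegral ℤ q :=
    ⟨X ^ d - C (p : ℤ), monic_X_pow_sub_C _ hd.ne_zero, by simp [hq]⟩
  obtain ⟨y, rfl⟩ := IsIntegrallyClosed.isIntegral_iff.mp hint
  have hy : y.natAbs ^ d = p := by
    have : y ^ d = (p : ℤ) := by exact_mod_cast (by simpa using hq : (y : ℚ) ^ d = p)
    simpa [Int.natAbs_pow] using congrArg Int.natAbs this
  exact hd.ne_one (hp.pow_eq_iff.mp hy).2

theorem isIntegral_of_pow_eq_natCast {A : Type*} [Ring A] {d n : ℕ} (hd : d ≠ 0) {u : A}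
    (hu : u ^ d = n) : IsIntegral ℤ u :=
  ⟨X ^ d - C (n : ℤ), monic_X_pow_sub_C _ hd, by simp [hu]⟩

theorem isIntegral_int_coe_iff {K L : Type*} [Field K] [Field L] [Algebra K L]
    {S : IntermediateField K L} (x : S) : IsIntegral ℤ (x : L) ↔ IsIntegral ℤ x :=
  isIntegral_algHom_iff (S.val.restrictScalars ℤ) Subtype.val_injective

theorem exists_mem_adjoin_image_Iic {K E : Type*} [Field K] [Field E] [Algebra K E]
    (f : ℕ → E) {x : E} (hx : x ∈ adjoin K (Set.range f)) :
    ∃ n, x ∈ adjoin K (f '' Set.Iic n) := by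
  have hmono : Monotone fun n => adjoin K (f '' Set.Iic n) := fun m n h =>
    adjoin.mono _ _ _ (Set.image_mono (Set.Iic_subset_Iic.mpr h))
  rwa [← Set.image_univ, ← Set.iUnion_Iic, Set.image_iUnion, adjoin_iUnion, ← SetLike.mem_coe,
    coe_iSup_of_directed hmono.directed_le, Set.mem_iUnion] at hx

theorem mem_of_forall_prime_exists_smul_mem {M : Type*} [AddCommGroup M]
    (N : Submodule ℤ M) {x : M} (h : ∀ q : ℕ, q.Prime → ∃ c : ℤ, ¬ (q : ℤ) ∣ c ∧ c • x ∈ N) :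
    x ∈ N := by
  obtain ⟨g, hg⟩ := (IsPrincipalIdealRing.principal (N.colon {x})).principal
  have hmem (c : ℤ) : c • x ∈ N ↔ g ∣ c := by
    rw [← Submodule.mem_colon_singleton, hg, Ideal.submodule_span_eq, Ideal.mem_span_singleton]
  by_cases hunit : g.natAbs = 1
  · simpa using (hmem 1).mpr (Int.natAbs_dvd.mp (by simp [hunit]))
  · obtain ⟨q, hq, hqg⟩ := Nat.exists_prime_and_dvd hunit
    obtain ⟨c, hqc, hc⟩ := h q hq
    exact absurd ((Int.natCast_dvd.mpr hqg).trans ((hmem c).mp hc)) hqc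

theorem discr_powerBasis_of_minpoly_eq_X_pow_sub_C {K E : Type*} [Field K] [Field E]
    [Algebra K E] [Algebra.IsSeparable K E] (B : PowerBasis K E) {n : ℕ} (hn : n ≠ 0) {a : K}
    (hmin : minpoly K B.gen = X ^ n - C a) :
    Algebra.discr K B.basis =
      (-1) ^ (n * (n - 1) / 2 + (n + 1) * (n - 1)) * (n ^ n * a ^ (n - 1)) := by
  have hdim : B.dim = n := by rw [← B.natDegree_minpoly, hmin, natDegree_X_pow_sub_C]
  have hnorm_gen : Algebra.norm K B.gen = (-1) ^ (n + 1) * a := by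
    rw [Algebra.PowerBasis.norm_gen_eq_coeff_zero_minpoly, hmin, hdim]
    simp [coeff_X_pow, hn.symm, pow_succ]
  have hnorm_n : Algebra.norm K (n : E) = n ^ n := by
    rw [← map_natCast (algebraMap K E), Algebra.norm_algebraMap, B.finrank, hdim]
  have := B.finite
  rw [Algebra.discr_powerBasis_eq_norm, B.finrank, hdim, hmin]
  simp only [derivative_sub, derivative_X_pow, derivative_C, sub_zero, map_mul, map_pow,
    map_natCast, aeval_X, hnorm_gen, hnorm_n]
  ring

-- Up to sign, the discriminant of `X ^ d - p`.
def radicalDiscr (p d : ℕ) : ℤ := d ^ d * p ^ (d - 1)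

theorem eq_or_eq_of_dvd_radicalDiscr {q p d : ℕ} (hq : q.Prime) (hp : p.Prime)
    (hd : d.Prime) (h : (q : ℤ) ∣ radicalDiscr p d) : q = p ∨ q = d := by
  have h' : q ∣ d ^ d * p ^ (d - 1) := Int.natCast_dvd_natCast.mp (by push_cast; exact h)
  rcases hq.dvd_mul.mp h' with h | h
  · exact .inr ((Nat.prime_dvd_prime_iff_eq hq hd).mp (hq.dvd_of_dvd_pow h))
  · exact .inl ((Nat.prime_dvd_prime_iff_eq hq hp).mp (hq.dvd_of_dvd_pow h))

variable {L : Type*} [Field L] [CharZero L]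

theorem minpoly_eq_X_pow_sub_C {p d : ℕ} (hp : p.Prime) (hd : d.Prime) {u : L}
    (hu : u ^ d = p) : minpoly ℚ u = X ^ d - C (p : ℚ) :=
  (minpoly.eq_of_irreducible_of_monic (irreducible_X_pow_sub_C_natPrime hp hd) (by simp [hu])
    (monic_X_pow_sub_C _ hd.ne_zero)).symm

theorem finrank_adjoin_eq {p d : ℕ} (hp : p.Prime) (hd : d.Prime) {u : L}
    (hu : u ^ d = p) : finrank ℚ ℚ⟮u⟯ = d := by
  rw [adjoin.finrank (isIntegral_of_pow_eq_natCast hd.ne_zero hu).tower_top,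
    minpoly_eq_X_pow_sub_C hp hd hu, natDegree_X_pow_sub_C]

theorem minpoly_eq_X_pow_sub_C_of_not_dvd {p d : ℕ} (hp : p.Prime) (hd : d.Prime) {u : L}
    (hu : u ^ d = p) (F : IntermediateField ℚ L) [FiniteDimensional ℚ F]
    (hF : ¬ d ∣ finrank ℚ F) : minpoly F u = X ^ d - C (p : F) := by
  have hint : IsIntegral F u := (isIntegral_of_pow_eq_natCast hd.ne_zero hu).tower_top
  have hmonic : (X ^ d - C (p : F)).Monic := monic_X_pow_sub_C _ hd.ne_zero
  refine (eq_of_monic_of_dvd_of_natDegree_le (minpoly.monic hint) hmonic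
    (minpoly.dvd F u (by simp [hu] : aeval u (X ^ d - C (p : F)) = 0)) ?_).symm
  have hle : ℚ⟮u⟯ ≤ F⟮u⟯.restrictScalars ℚ :=
    adjoin_simple_le_iff.mpr (mem_adjoin_simple_self F u)
  have : FiniteDimensional F F⟮u⟯ := adjoin.finiteDimensional hint
  have htower : d ∣ finrank ℚ F * finrank F F⟮u⟯ := by
    have h2 := finrank_dvd_of_le_right hle
    rw [finrank_adjoin_eq hp hd hu] at h2
    have : Module.Free F F⟮u⟯ := Module.Free.of_divisionRing _ _
    rwa [Module.finrank_mul_finrank ℚ F F⟮u⟯]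
  rw [natDegree_X_pow_sub_C, ← adjoin.finrank hint]
  exact Nat.le_of_dvd finrank_pos ((hd.dvd_mul.mp htower).resolve_left hF)

theorem finrank_adjoin_of_not_dvd {p d : ℕ} (hp : p.Prime) (hd : d.Prime) {u : L}
    (hu : u ^ d = p) (F : IntermediateField ℚ L) [FiniteDimensional ℚ F]
    (hF : ¬ d ∣ finrank ℚ F) : finrank ℚ (F⟮u⟯.restrictScalars ℚ) = finrank ℚ F * d := by
  have : Module.Free F F⟮u⟯ := Module.Free.of_divisionRing _ _
  change finrank ℚ F⟮u⟯ = _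
  rw [← Module.finrank_mul_finrank ℚ F F⟮u⟯,
    adjoin.finrank (isIntegral_of_pow_eq_natCast hd.ne_zero hu).tower_top,
    minpoly_eq_X_pow_sub_C_of_not_dvd hp hd hu F hF, natDegree_X_pow_sub_C]

def MultipliesIntegralsInto (c : ℤ) (F : IntermediateField ℚ L) (A : Subalgebra ℤ L) : Prop :=
  ∀ y ∈ F, IsIntegral ℤ y → c • y ∈ A

theorem MultipliesIntegralsInto.smul_mem_of_mem_adjoin_gen {F : IntermediateField ℚ L}
    {A B : Subalgebra ℤ L} {c : ℤ} (hc : MultipliesIntegralsInto c F A) (hAB : A ≤ B) {u : L}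
    (huB : u ∈ B) {w : F⟮u⟯}
    (hw : w ∈ Algebra.adjoin (integralClosure ℤ F) {AdjoinSimple.gen F u}) :
    c • (w : L) ∈ B := by
  rw [Algebra.adjoin_singleton_eq_range_aeval] at hw
  obtain ⟨P, rfl⟩ := hw
  rw [AlgHom.toRingHom_eq_coe, AlgHom.coe_toRingHom, aeval_eq_sum_range]
  simp only [AddSubmonoidClass.coe_finsetSum, Finset.smul_sum]
  refine Subalgebra.sum_mem _ fun i _ => ?_
  have hcoeff : IsIntegral ℤ ((P.coeff i : F) : L) :=
    (isIntegral_int_coe_iff _).mpr (P.coeff i).2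
  have : ((P.coeff i • AdjoinSimple.gen F u ^ i : F⟮u⟯) : L) = ((P.coeff i : F) : L) * u ^ i := by
    rw [Algebra.smul_def, MulMemClass.coe_mul, SubmonoidClass.coe_pow, AdjoinSimple.coe_gen]
    rfl
  rw [this, ← smul_mul_assoc]
  exact mul_mem (hAB (hc _ (P.coeff i : F).2 hcoeff)) (pow_mem huB i)

theorem MultipliesIntegralsInto.adjoin_simple_of_minpoly_eq_X_pow_sub_C {F : IntermediateField ℚ L}
    [FiniteDimensional ℚ F] {A B : Subalgebra ℤ L} {c : ℤ} (hc : MultipliesIntegralsInto c F A)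
    (hAB : A ≤ B) {u : L} (huB : u ∈ B) (hu : IsIntegral ℤ u) {n : ℕ} (hn : n ≠ 0) {a : ℤ}
    (hmin : minpoly F u = X ^ n - C (a : F)) :
    MultipliesIntegralsInto (n ^ n * a ^ (n - 1) * c) (F⟮u⟯.restrictScalars ℚ) B := by
  intro y hy hyint
  let R := integralClosure ℤ F
  have : IsFractionRing R F := integralClosure.isFractionRing_of_finite_extension ℚ F
  have : IsIntegrallyClosed R := integralClosure.isIntegrallyClosedOfFiniteExtension ℚ
  have : FiniteDimensional F F⟮u⟯ := adjoin.finiteDimensional hu.tower_top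
  let PB := adjoin.powerBasis (K := F) hu.tower_top
  have hgen : PB.gen = AdjoinSimple.gen F u := adjoin.powerBasis_gen _
  let z : F⟮u⟯ := ⟨y, hy⟩
  have hdiscr := Algebra.discr_mul_isIntegral_mem_adjoin (R := R) (B := PB)
    (hint := by rw [hgen]; exact ((isIntegral_int_coe_iff (AdjoinSimple.gen F u)).mp hu).tower_top)
    (hz := ((isIntegral_int_coe_iff z).mp hyint).tower_top)
  rw [discr_powerBasis_of_minpoly_eq_X_pow_sub_C PB hn (by rw [hgen, minpoly_gen, hmin]), hgen]
    at hdiscr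
  have hm : ((n ^ n * a ^ (n - 1) : ℤ) • z) ∈ Algebra.adjoin R {AdjoinSimple.gen F u} := by
    rw [← Int.cast_smul_eq_zsmul F]
    push_cast
    rcases neg_one_pow_eq_or F (n * (n - 1) / 2 + (n + 1) * (n - 1)) with h | h <;>
      simpa [h, neg_smul] using hdiscr
  rw [mul_comm, mul_smul]
  exact hc.smul_mem_of_mem_adjoin_gen hAB huB hm

theorem MultipliesIntegralsInto.adjoin_radical {p d : ℕ} (hp : p.Prime) (hd : d.Prime) {u : L}
    (hu : u ^ d = p) {F : IntermediateField ℚ L} [FiniteDimensional ℚ F]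
    (hF : ¬ d ∣ finrank ℚ F) {A B : Subalgebra ℤ L} {c : ℤ}
    (hc : MultipliesIntegralsInto c F A) (hAB : A ≤ B) (huB : u ∈ B) :
    MultipliesIntegralsInto (radicalDiscr p d * c) (F⟮u⟯.restrictScalars ℚ) B :=
  hc.adjoin_simple_of_minpoly_eq_X_pow_sub_C hAB huB
    (isIntegral_of_pow_eq_natCast hd.ne_zero hu) hd.ne_zero
    (by simpa using minpoly_eq_X_pow_sub_C_of_not_dvd hp hd hu F hF)

section Tower

variable {p d : ℕ → ℕ} {ξ : ℕ → L}

theorem max_lt_min_of_lt (hmono : ∀ i, max (p i) (d i) < min (p (i + 1)) (d (i + 1))) {i t : ℕ}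
    (h : i < t) : max (p i) (d i) < min (p t) (d t) := by
  induction t, h using Nat.le_induction with
  | base => exact hmono i
  | succ t _ ih => exact ih.trans_le ((min_le_max).trans (hmono t).le)

theorem index_eq_of_max_lt_min (hmono : ∀ i, max (p i) (d i) < min (p (i + 1)) (d (i + 1)))
    {q i t : ℕ} (hi : q = p i ∨ q = d i) (ht : q = p t ∨ q = d t) : i = t := by
  have key {i t : ℕ} (hi : q = p i ∨ q = d i) (ht : q = p t ∨ q = d t) : ¬ i < t := fun h => by
    have := max_lt_min_of_lt hmono h
    simp only [max_lt_iff, lt_min_iff] at this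
    omega
  rcases lt_trichotomy i t with h | h | h
  exacts [absurd h (key hi ht), h, absurd h (key ht hi)]

theorem injective_of_max_lt_min (hmono : ∀ i, max (p i) (d i) < min (p (i + 1)) (d (i + 1))) :
    Function.Injective d :=
  fun _ _ h => index_eq_of_max_lt_min hmono (.inr rfl) (.inr h)

theorem finiteDimensional_adjoin_image (hd : ∀ i, (d i).Prime) (hξ : ∀ i, ξ i ^ d i = p i)
    (J : Finset ℕ) : FiniteDimensional ℚ (adjoin ℚ (ξ '' J)) := by
  have : Finite (ξ '' J) := (J.finite_toSet.image ξ).to_subtype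
  exact finiteDimensional_adjoin fun _ ⟨i, _, hi⟩ =>
    hi ▸ (isIntegral_of_pow_eq_natCast (hd i).ne_zero (hξ i)).tower_top

theorem multipliesIntegralsInto_adjoin_union (hp : ∀ i, (p i).Prime) (hd : ∀ i, (d i).Prime)
    (hξ : ∀ i, ξ i ^ d i = p i) (hdinj : Function.Injective d) (S : Finset ℕ) {J : Finset ℕ}
    {c : ℤ} (hc : MultipliesIntegralsInto c (adjoin ℚ (ξ '' J)) (Algebra.adjoin ℤ (ξ '' J)))
    (hS : ∀ i ∈ S, ¬ d i ∣ finrank ℚ (adjoin ℚ (ξ '' J))) :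
    MultipliesIntegralsInto ((∏ i ∈ S, radicalDiscr (p i) (d i)) * c)
      (adjoin ℚ (ξ '' ↑(J ∪ S))) (Algebra.adjoin ℤ (ξ '' ↑(J ∪ S))) := by
  classical
  induction S using Finset.induction_on generalizing J c with
  | empty => simpa using hc
  | insert i S hi ih =>
    have := finiteDimensional_adjoin_image hd hξ J
    have hfield : (adjoin (adjoin ℚ (ξ '' J)) {ξ i}).restrictScalars ℚ
        = adjoin ℚ (ξ '' ↑(insert i J)) := by
      refine (adjoin_adjoin_left (F := ℚ) (ξ '' J) {ξ i}).trans ?_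
      rw [Finset.coe_insert, Set.image_insert_eq, Set.union_singleton]
    have hstep := hc.adjoin_radical (hp i) (hd i) (hξ i) (hS i (Finset.mem_insert_self i S))
      (Algebra.adjoin_mono (Set.image_mono (Finset.coe_subset.mpr (Finset.subset_insert i J))))
      (Algebra.subset_adjoin ⟨i, Finset.mem_insert_self i J, rfl⟩)
    have hfinrank := finrank_adjoin_of_not_dvd (hp i) (hd i) (hξ i) _
      (hS i (Finset.mem_insert_self i S))
    rw [hfield] at hstep hfinrank
    have := ih hstep fun t ht hdvd => by
      rw [hfinrank] at hdvd
      rcases (hd t).dvd_mul.mp hdvd with h | h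
      · exact hS t (Finset.mem_insert_of_mem ht) h
      · exact hi (hdinj ((Nat.prime_dvd_prime_iff_eq (hd t) (hd i)).mp h) ▸ ht)
    rw [Finset.insert_union, ← Finset.union_insert] at this
    rwa [Finset.prod_insert hi, mul_comm (radicalDiscr _ _), mul_assoc]

theorem multipliesIntegralsInto_prod_erase (hp : ∀ i, (p i).Prime) (hd : ∀ i, (d i).Prime)
    (hξ : ∀ i, ξ i ^ d i = p i) (hdinj : Function.Injective d) {j : ℕ}
    (hO : ∀ x ∈ adjoin ℚ {ξ j}, IsIntegral ℤ x → x ∈ Algebra.adjoin ℤ {ξ j}) {S : Finset ℕ}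
    (hj : j ∈ S) :
    MultipliesIntegralsInto (∏ i ∈ S.erase j, radicalDiscr (p i) (d i))
      (adjoin ℚ (ξ '' S)) (Algebra.adjoin ℤ (ξ '' S)) := by
  have hc : MultipliesIntegralsInto 1 (adjoin ℚ (ξ '' ↑({j} : Finset ℕ)))
      (Algebra.adjoin ℤ (ξ '' ↑({j} : Finset ℕ))) := by
    simpa [MultipliesIntegralsInto] using hO
  have hS (i : ℕ) (hi : i ∈ S.erase j) : ¬ d i ∣ finrank ℚ (adjoin ℚ (ξ '' ↑({j} : Finset ℕ))) := by
    rw [Finset.coe_singleton, Set.image_singleton, finrank_adjoin_eq (hp j) (hd j) (hξ j),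
      Nat.prime_dvd_prime_iff_eq (hd i) (hd j)]
    exact fun h => Finset.ne_of_mem_erase hi (hdinj h)
  simpa [Finset.insert_erase hj] using
    multipliesIntegralsInto_adjoin_union hp hd hξ hdinj (S.erase j) hc hS

theorem exists_multipliesIntegralsInto_not_dvd (hp : ∀ i, (p i).Prime) (hd : ∀ i, (d i).Prime)
    (hmono : ∀ i, max (p i) (d i) < min (p (i + 1)) (d (i + 1))) (hξ : ∀ i, ξ i ^ d i = p i)
    (hO : ∀ i, ∀ x ∈ adjoin ℚ {ξ i}, IsIntegral ℤ x → x ∈ Algebra.adjoin ℤ {ξ i})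
    (n : ℕ) {q : ℕ} (hq : q.Prime) :
    ∃ c : ℤ, ¬ (q : ℤ) ∣ c ∧
      MultipliesIntegralsInto c (adjoin ℚ (ξ '' Set.Iic n))
        (Algebra.adjoin ℤ (ξ '' Set.Iic n)) := by
  obtain ⟨j, hj, hqj⟩ : ∃ j ∈ Finset.Iic n, ∀ i ∈ Finset.Iic n, (q = p i ∨ q = d i) → i = j := by
    by_cases h : ∃ j ∈ Finset.Iic n, q = p j ∨ q = d j
    · obtain ⟨j, hj, hqj⟩ := h
      exact ⟨j, hj, fun i _ hqi => index_eq_of_max_lt_min hmono hqi hqj⟩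
    · exact ⟨0, Finset.mem_Iic.mpr (Nat.zero_le n), fun i hi hqi => absurd ⟨i, hi, hqi⟩ h⟩
  refine ⟨_, fun hdvd => ?_, Finset.coe_Iic n ▸
    multipliesIntegralsInto_prod_erase hp hd hξ (injective_of_max_lt_min hmono) (hO j) hj⟩
  obtain ⟨i, hi, hqi⟩ := ((Nat.prime_iff_prime_int.mp hq).dvd_finsetProd_iff _).mp hdvd
  exact Finset.ne_of_mem_erase hi (hqj i (Finset.mem_of_mem_erase hi)
    (eq_or_eq_of_dvd_radicalDiscr hq (hp i) (hd i) hqi))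

end Tower

end RadicalTower

open RadicalTower

/-- Let `(p_i)`, `(d_i)` be primes with `min{p_{i+1}, d_{i+1}} > max{p_i, d_i}`,
`ξ_i` a `d_i`-th root of `p_i`, and suppose the ring of integers of `ℚ(ξ_i)` is `ℤ[ξ_i]` for
each `i`. Then the ring of integers of `K = ℚ(ξ_0, ξ_1, …)` is `⋃_i ℤ[ξ_0, …, ξ_i]`:
an element `x ∈ K` is integral over `ℤ` iff `x ∈ ℤ[ξ_0, …, ξ_i]` for some `i`. -/
theorem stmt16 (p d : ℕ → ℕ) (hp : ∀ i, (p i).Prime) (hd : ∀ i, (d i).Prime)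
    (hmono : ∀ i, max (p i) (d i) < min (p (i + 1)) (d (i + 1)))
    (ξ : ℕ → ℂ) (hξ : ∀ i, ξ i ^ d i = (p i : ℂ))
    (hOi : ∀ i, ∀ x ∈ IntermediateField.adjoin ℚ {ξ i},
      IsIntegral ℤ x → x ∈ Algebra.adjoin ℤ {ξ i}) :
    ∀ x ∈ IntermediateField.adjoin ℚ (Set.range ξ),
      (IsIntegral ℤ x ↔ ∃ i, x ∈ Algebra.adjoin ℤ (ξ '' Set.Iic i)) := by
  intro x hx
  constructor
  · intro hint
    obtain ⟨n, hxn⟩ := exists_mem_adjoin_image_Iic ξ hx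
    refine ⟨n, mem_of_forall_prime_exists_smul_mem
      (Algebra.adjoin ℤ (ξ '' Set.Iic n)).toSubmodule fun q hq => ?_⟩
    obtain ⟨c, hqc, hc⟩ := exists_multipliesIntegralsInto_not_dvd hp hd hmono hξ hOi n hq
    exact ⟨c, hqc, hc x hxn hint⟩
  · rintro ⟨n, hxn⟩
    exact Algebra.adjoin_le (S := integralClosure ℤ ℂ) (Set.image_subset_iff.mpr
      fun i _ => isIntegral_of_pow_eq_natCast (hd i).ne_zero (hξ i)) hxn
end
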